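/- For every d ≥ 1 and every p with 2 ≤ p < ∞ there exists D > 0 (depending only on p) such that for every injection π : Δ^d → ℕ and every finitely supported family of reals (a_ȷ)_{ȷ∈Δ^d}: ∫₀¹ ‖Σ_{ȷ∈Δ^d} r_{π(ȷ)}(u)·a_ȷ·𝐫_ȷ‖_{L_p[0,1]} du ≤ D·‖Σ_{ȷ∈Δ^d} a_ȷ·𝐫_ȷ‖_{L_p[0,1]}; that is, the Rademacher chaos {𝐫_ȷ}_{ȷ∈Δ^d} is a RUC sequence in L_p[0,1] for 2 ≤ p < ∞. (Instance of the Corollary to Proposition 3.) -/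

import Mathlib

/-
For fixed `t`, the function `u ↦ ∑ r_{π(ȷ)}(u) a_ȷ 𝐫_ȷ(t)` is a Rademacher sum with distinct
indices and coefficients of modulus `|a_ȷ|`, so Khintchine's inequality bounds its `L_p(du)` norm by
`((2k)!)^{1/2k} (∑ a_ȷ²)^{1/2}` for any `2k ≥ p`, uniformly in `t`. Jensen and Fubini turn this into
the same bound for `∫ ‖·‖_{L_p(dt)} du`, and
`(∑ a_ȷ²)^{1/2} = ‖∑ a_ȷ 𝐫_ȷ‖_{L_2} ≤ ‖∑ a_ȷ 𝐫_ȷ‖_{L_p}` because the chaos is orthonormal.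

Khintchine's moment bound `∫ (∑ b_j r_{m_j})^{2k} ≤ (2k)! (∑ b_j²)^k` is proved by induction on the
number of terms, expanding binomially in one term `b r_M` with `M ≥ 1`: its odd powers integrate to
zero. Indeed, after cancelling squares, a product of distinct Rademacher functions `r_m`, `m ≥ 1`,
has integral zero: the factors other than the one with the largest index are constant on the
dyadic intervals on which that one has mean zero.
-/


open MeasureTheory

/-- Rademacher function `r_j(t) = (-1)^⌊2^j t⌋`. -/
noncomputable def rademacher (j : ℕ) (t : ℝ) : ℝ := (-1 : ℝ) ^ ⌊(2 : ℝ) ^ j * t⌋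

/-- Rademacher chaos `𝐫_ȷ = ∏ i, r_{ȷ i}`. -/
noncomputable def chaos {d : ℕ} (j : Fin d → ℕ) (t : ℝ) : ℝ := ∏ i, rademacher (j i) t

/-- The lower triangular index set `Δ^d = {ȷ : j₁ > j₂ > ... > j_d ≥ 1}`. -/
def Delta (d : ℕ) : Set (Fin d → ℕ) := {j | StrictAnti j ∧ ∀ i, 1 ≤ j i}

/-- The `L_p[0,1]` norm, `1 ≤ p < ∞`. -/
noncomputable def LpNorm (p : ℝ) (f : ℝ → ℝ) : ℝ :=
  (∫ t in Set.Icc (0 : ℝ) 1, |f t| ^ p) ^ (1 / p)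

/-- The `L_∞[0,1]` norm (essential supremum on `[0,1]`). -/
noncomputable def LinftyNorm (f : ℝ → ℝ) : ℝ :=
  (eLpNorm f ⊤ (volume.restrict (Set.Icc (0 : ℝ) 1))).toReal

open Set
open scoped Nat

instance : IsProbabilityMeasure (volume.restrict (Icc (0 : ℝ) 1)) :=
  ⟨by simp⟩

lemma intervalIntegral_congr_Ico {f g : ℝ → ℝ} {a b : ℝ} (hab : a ≤ b) (h : EqOn f g (Ico a b)) :
    ∫ x in a..b, f x = ∫ x in a..b, g x := by
  simp only [intervalIntegral.integral_of_le hab, integral_Ioc_eq_integral_Ioo]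
  exact setIntegral_congr_fun measurableSet_Ioo (h.mono Ioo_subset_Ico_self)

lemma setIntegral_Icc_congr_Ico {f g : ℝ → ℝ} {a b : ℝ} (h : EqOn f g (Ico a b)) :
    ∫ x in Icc a b, f x = ∫ x in Icc a b, g x := by
  simp only [integral_Icc_eq_integral_Ico]
  exact setIntegral_congr_fun measurableSet_Ico h

lemma intervalIntegrable_of_abs_le {f : ℝ → ℝ} (hf : Measurable f) {C : ℝ} (hC : ∀ t, |f t| ≤ C)
    (a b : ℝ) : IntervalIntegrable f volume a b :=
  intervalIntegrable_const.mono_fun' hf.aestronglyMeasurable (ae_of_all _ hC)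

section Rademacher

lemma rademacher_eq_one_or_neg_one (j : ℕ) (t : ℝ) : rademacher j t = 1 ∨ rademacher j t = -1 :=
  (Int.even_or_odd _).imp Even.neg_one_zpow Odd.neg_one_zpow

lemma rademacher_sq (j : ℕ) (t : ℝ) : rademacher j t ^ 2 = 1 := by
  rcases rademacher_eq_one_or_neg_one j t with h | h <;> simp [h]

lemma abs_rademacher (j : ℕ) (t : ℝ) : |rademacher j t| = 1 := by
  rcases rademacher_eq_one_or_neg_one j t with h | h <;> simp [h]

lemma rademacher_pow_of_even (j : ℕ) (t : ℝ) {n : ℕ} (hn : Even n) : rademacher j t ^ n = 1 := by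
  obtain ⟨k, rfl⟩ := hn.two_dvd
  rw [pow_mul, rademacher_sq, one_pow]

lemma rademacher_pow_of_odd (j : ℕ) (t : ℝ) {n : ℕ} (hn : Odd n) :
    rademacher j t ^ n = rademacher j t := by
  obtain ⟨k, rfl⟩ := hn
  rw [pow_succ, pow_mul, rademacher_sq, one_pow, one_mul]

@[fun_prop]
lemma measurable_rademacher (j : ℕ) : Measurable (rademacher j) :=
  (measurable_of_countable fun z : ℤ => (-1 : ℝ) ^ z).comp
    (Int.measurable_floor.comp (measurable_const_mul _))

lemma rademacher_zero_of_mem_Ico {t : ℝ} (ht : t ∈ Ico (0 : ℝ) 1) : rademacher 0 t = 1 := by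
  rw [rademacher, pow_zero, one_mul, Int.floor_eq_zero_iff.mpr ht, zpow_zero]

lemma abs_prod_rademacher {ι : Type*} (A : Finset ι) (ν : ι → ℕ) (t : ℝ) :
    |∏ i ∈ A, rademacher (ν i) t| = 1 := by
  rw [Finset.abs_prod]
  exact Finset.prod_eq_one fun i _ => abs_rademacher (ν i) t

lemma abs_sum_mul_rademacher_le {ι : Type*} (B : Finset ι) (m : ι → ℕ) (b : ι → ℝ) (u : ℝ) :
    |∑ j ∈ B, b j * rademacher (m j) u| ≤ ∑ j ∈ B, |b j| :=
  (Finset.abs_sum_le_sum_abs _ _).trans_eq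
    (Finset.sum_congr rfl fun j _ => by rw [abs_mul, abs_rademacher, mul_one])

end Rademacher

section Dyadic

noncomputable def dyadic (n k : ℕ) : ℝ := k / 2 ^ n

lemma dyadic_le_succ (n k : ℕ) : dyadic n k ≤ dyadic n (k + 1) := by
  unfold dyadic
  gcongr
  simp

lemma dyadic_succ_two_mul (n k : ℕ) : dyadic (n + 1) (2 * k) = dyadic n k := by
  unfold dyadic
  push_cast
  rw [pow_succ]
  field_simp

lemma floor_two_pow_mul_eq {n k : ℕ} {t : ℝ} (ht : t ∈ Ico (dyadic n k) (dyadic n (k + 1))) :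
    ⌊(2 : ℝ) ^ n * t⌋ = k := by
  have h2 : (0 : ℝ) < 2 ^ n := by positivity
  rw [Int.floor_eq_iff, Int.cast_natCast, ← div_le_iff₀' h2, ← lt_div_iff₀' h2]
  simpa [dyadic] using ht

lemma rademacher_eq_of_floor_eq {m N : ℕ} (hm : m ≤ N) {k : ℤ} {t : ℝ}
    (ht : ⌊(2 : ℝ) ^ N * t⌋ = k) : rademacher m t = (-1) ^ (k / 2 ^ (N - m)) := by
  have h : (2 : ℝ) ^ m * t = 2 ^ N * t / ((2 ^ (N - m) : ℕ) : ℝ) := by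
    rw [← pow_sub_mul_pow (2 : ℝ) hm]
    push_cast
    field_simp
  rw [rademacher, h, Int.floor_div_natCast, ht]
  push_cast
  rfl

lemma integral_rademacher_succ_dyadic (N i : ℕ) :
    ∫ t in dyadic N i..dyadic N (i + 1), rademacher (N + 1) t = 0 := by
  have hint := intervalIntegrable_of_abs_le (measurable_rademacher (N + 1))
    (fun t => (abs_rademacher _ t).le)
  have hleft : EqOn (rademacher (N + 1)) 1
      (Ico (dyadic (N + 1) (2 * i)) (dyadic (N + 1) (2 * i + 1))) := fun t ht => by
      rw [rademacher, floor_two_pow_mul_eq ht]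
      exact Even.neg_one_zpow (by simp)
  have hright : EqOn (rademacher (N + 1)) (-1)
      (Ico (dyadic (N + 1) (2 * i + 1)) (dyadic (N + 1) (2 * i + 1 + 1))) := fun t ht => by
      rw [rademacher, floor_two_pow_mul_eq ht]
      exact Odd.neg_one_zpow (by simp)
  have hend : dyadic N (i + 1) = dyadic (N + 1) (2 * i + 1 + 1) := by
    rw [← dyadic_succ_two_mul]
    ring_nf
  rw [← dyadic_succ_two_mul, hend, ← intervalIntegral.integral_add_adjacent_intervals
      (hint _ (dyadic (N + 1) (2 * i + 1))) (hint _ _),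
    intervalIntegral_congr_Ico (dyadic_le_succ _ _) hleft,
    intervalIntegral_congr_Ico (dyadic_le_succ _ _) hright]
  simp [dyadic]
  ring

end Dyadic

section Walsh

lemma integral_prod_rademacher_mul_rademacher {T : Finset ℕ} {N : ℕ} (hT : ∀ m ∈ T, m ≤ N) :
    ∫ t in (0 : ℝ)..1, (∏ m ∈ T, rademacher m t) * rademacher (N + 1) t = 0 := by
  have hint : ∀ a b, IntervalIntegrable
      (fun t => (∏ m ∈ T, rademacher m t) * rademacher (N + 1) t) volume a b :=
    intervalIntegrable_of_abs_le (by fun_prop) fun t => by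
      rw [abs_mul, abs_rademacher, mul_one]
      exact (abs_prod_rademacher T id t).le
  -- every `r_m` with `m ≤ N` is constant on the dyadic intervals of length `2⁻ᴺ`
  have piece : ∀ i : ℕ, ∫ t in dyadic N i..dyadic N (i + 1),
      (∏ m ∈ T, rademacher m t) * rademacher (N + 1) t = 0 := by
    intro i
    have hconst : EqOn (fun t => (∏ m ∈ T, rademacher m t) * rademacher (N + 1) t)
        (fun t => (∏ m ∈ T, (-1 : ℝ) ^ ((i : ℤ) / 2 ^ (N - m))) * rademacher (N + 1) t)
        (Ico (dyadic N i) (dyadic N (i + 1))) := fun t ht => by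
      simp only
      rw [Finset.prod_congr rfl fun m hm => rademacher_eq_of_floor_eq (hT m hm)
        (floor_two_pow_mul_eq ht)]
    rw [intervalIntegral_congr_Ico (dyadic_le_succ N i) hconst,
      intervalIntegral.integral_const_mul, integral_rademacher_succ_dyadic, mul_zero]
  have h0 : dyadic N 0 = 0 := by simp [dyadic]
  have h1 : dyadic N (2 ^ N) = 1 := by simp [dyadic]
  have hsum := intervalIntegral.sum_integral_adjacent_intervals (a := dyadic N) (n := 2 ^ N)
    fun i _ => hint _ _
  rw [h0, h1] at hsum
  rw [← hsum]
  exact Finset.sum_eq_zero fun i _ => piece i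

lemma integral_prod_rademacher_eq_zero {S : Finset ℕ} (hS : S.Nonempty) (hS1 : ∀ m ∈ S, 1 ≤ m) :
    ∫ t in Icc (0 : ℝ) 1, ∏ m ∈ S, rademacher m t = 0 := by
  obtain ⟨N, hN⟩ : ∃ N, S.max' hS = N + 1 :=
    ⟨S.max' hS - 1, by have := hS1 _ (S.max'_mem hS); omega⟩
  rw [integral_Icc_eq_integral_Ioc, ← intervalIntegral.integral_of_le zero_le_one]
  simp_rw [← Finset.prod_erase_mul S _ (hN ▸ S.max'_mem hS)]
  refine integral_prod_rademacher_mul_rademacher fun m hm => ?_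
  have := S.le_max' m (Finset.mem_of_mem_erase hm)
  have := Finset.ne_of_mem_erase hm
  omega

lemma prod_rademacher_eq_prod_filter_odd {ι : Type*} [DecidableEq ι] (A : Finset ι) (ν : ι → ℕ)
    (t : ℝ) : ∏ i ∈ A, rademacher (ν i) t
      = ∏ m ∈ (A.image ν).filter (fun m => Odd (A.filter (ν · = m)).card), rademacher m t := by
  rw [Finset.prod_comp (fun m => rademacher m t) ν, Finset.prod_filter]
  refine Finset.prod_congr rfl fun m _ => ?_
  split_ifs with h
  · exact rademacher_pow_of_odd _ _ h
  · exact rademacher_pow_of_even _ _ (Nat.not_odd_iff_even.mp h)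

/-- The index `0` may occur among the `ν i`: `r₀ = 1` on `[0,1)`. -/
lemma integral_rademacher_mul_prod_eq_zero {ι : Type*} (A : Finset ι) (ν : ι → ℕ) {M : ℕ}
    (hM : 1 ≤ M) (hν : ∀ i ∈ A, ν i ≠ M) :
    ∫ t in Icc (0 : ℝ) 1, rademacher M t * ∏ i ∈ A, rademacher (ν i) t = 0 := by
  classical
  set T := ((A.image ν).filter fun m => Odd (A.filter (ν · = m)).card).erase 0
  have hMT : M ∉ T := by
    simp only [T, Finset.mem_erase, Finset.mem_filter, Finset.mem_image, not_and]
    rintro - ⟨i, hi, rfl⟩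
    exact (hν i hi rfl).elim
  rw [setIntegral_Icc_congr_Ico (g := fun t => ∏ m ∈ insert M T, rademacher m t) fun t ht => by
    simp only
    rw [Finset.prod_insert hMT, Finset.prod_erase (f := fun m => rademacher m t) _
      (rademacher_zero_of_mem_Ico ht), prod_rademacher_eq_prod_filter_odd]]
  refine integral_prod_rademacher_eq_zero (Finset.insert_nonempty _ _) fun m hm => ?_
  rcases Finset.mem_insert.mp hm with rfl | hm
  · exact hM
  · exact Nat.one_le_iff_ne_zero.mpr (Finset.ne_of_mem_erase hm)

end Walsh

lemma sum_range_two_mul_add_one_eq {M : Type*} [AddCommMonoid M] (f : ℕ → M) (k : ℕ) :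
    ∑ i ∈ Finset.range (2 * k + 1), f i
      = ∑ l ∈ Finset.range (k + 1), f (2 * l) + ∑ l ∈ Finset.range k, f (2 * l + 1) := by
  induction k with
  | zero => simp
  | succ k ih =>
    rw [show 2 * (k + 1) + 1 = 2 * k + 1 + 1 + 1 by ring, Finset.sum_range_succ,
      Finset.sum_range_succ, ih, Finset.sum_range_succ (fun l => f (2 * l)) (k + 1),
      Finset.sum_range_succ (fun l => f (2 * l + 1)) k, show 2 * (k + 1) = 2 * k + 1 + 1 by ring]
    abel

lemma Nat.choose_mul_factorial_sub_le {n k : ℕ} (hk : k ≤ n) : n.choose k * (n - k)! ≤ n ! := by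
  rw [← Nat.choose_mul_factorial_mul_factorial hk, mul_right_comm]
  exact Nat.le_mul_of_pos_right _ (Nat.factorial_pos k)

lemma sum_choose_mul_factorial_le (k : ℕ) {x y : ℝ} (hx : 0 ≤ x) (hy : 0 ≤ y) :
    ∑ l ∈ Finset.range (k + 1), x ^ l * (2 * k).choose (2 * l) * ((2 * (k - l))! * y ^ (k - l))
      ≤ (2 * k)! * (x + y) ^ k := by
  rw [add_pow, Finset.mul_sum]
  refine Finset.sum_le_sum fun l hl => ?_
  have hlk : l ≤ k := Nat.lt_succ_iff.mp (Finset.mem_range.mp hl)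
  have hfact : ((2 * k).choose (2 * l) * (2 * (k - l))! : ℝ) ≤ (2 * k)! := by
    rw [Nat.mul_sub]
    exact_mod_cast Nat.choose_mul_factorial_sub_le (by omega)
  have hchoose : (1 : ℝ) ≤ k.choose l := by exact_mod_cast Nat.choose_pos hlk
  calc x ^ l * (2 * k).choose (2 * l) * ((2 * (k - l))! * y ^ (k - l))
      = x ^ l * y ^ (k - l) * ((2 * k).choose (2 * l) * (2 * (k - l))!) := by ring
    _ ≤ x ^ l * y ^ (k - l) * ((2 * k)! * k.choose l) :=
        mul_le_mul_of_nonneg_left (hfact.trans (le_mul_of_one_le_right (by positivity) hchoose))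
          (by positivity)
    _ = (2 * k)! * (x ^ l * y ^ (k - l) * k.choose l) := by ring

section LpNorm

lemma integral_le_integral_rpow_rpow_one_div {α : Type*} [MeasurableSpace α] {μ : Measure α}
    [IsProbabilityMeasure μ] {g : α → ℝ} (hg : 0 ≤ᵐ[μ] g) {e : ℝ} (he : 1 ≤ e)
    (hge : MemLp g (ENNReal.ofReal e) μ) : ∫ x, g x ∂μ ≤ (∫ x, g x ^ e ∂μ) ^ (1 / e) := by
  rcases he.eq_or_lt with rfl | he
  · simp
  -- Hölder against the constant function `1`
  simpa using integral_mul_le_Lp_mul_Lq_of_nonneg (Real.HolderConjugate.conjExponent he) hg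
    (ae_of_all _ fun _ => zero_le_one) hge (memLp_const 1)

lemma LpNorm_nonneg (p : ℝ) (f : ℝ → ℝ) : 0 ≤ LpNorm p f :=
  Real.rpow_nonneg (integral_nonneg fun _ => Real.rpow_nonneg (abs_nonneg _) _) _

lemma LpNorm_rpow {p : ℝ} (hp : p ≠ 0) (f : ℝ → ℝ) :
    LpNorm p f ^ p = ∫ t in Icc (0 : ℝ) 1, |f t| ^ p := by
  rw [LpNorm, ← Real.rpow_mul (integral_nonneg fun _ => Real.rpow_nonneg (abs_nonneg _) _),
    one_div_mul_cancel hp, Real.rpow_one]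

lemma LpNorm_le_LpNorm {q p : ℝ} (hq : 0 < q) (hqp : q ≤ p) {f : ℝ → ℝ}
    (hf : MemLp f (ENNReal.ofReal p) (volume.restrict (Icc 0 1))) : LpNorm q f ≤ LpNorm p f := by
  have hmem : MemLp (fun t => |f t| ^ q) (ENNReal.ofReal (p / q)) (volume.restrict (Icc 0 1)) := by
    have := hf.norm_rpow_div (ENNReal.ofReal q)
    rwa [ENNReal.toReal_ofReal hq.le, ← ENNReal.ofReal_div_of_pos hq] at this
  have h := integral_le_integral_rpow_rpow_one_div (ae_of_all _ fun t => by positivity)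
    ((one_le_div hq).mpr hqp) hmem
  simp_rw [← Real.rpow_mul (abs_nonneg _), mul_div_cancel₀ _ hq.ne'] at h
  calc LpNorm q f ≤ ((∫ t in Icc (0 : ℝ) 1, |f t| ^ p) ^ (1 / (p / q))) ^ (1 / q) := by
        unfold LpNorm
        gcongr
    _ = LpNorm p f := by
        rw [LpNorm, ← Real.rpow_mul (integral_nonneg fun _ => by positivity)]
        congr 1
        field_simp

lemma LpNorm_le_of_abs_le {p : ℝ} (hp : 0 < p) {f : ℝ → ℝ} {T : ℝ} (hf : ∀ t, |f t| ≤ T) :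
    LpNorm p f ≤ T := by
  have hT : 0 ≤ T := (abs_nonneg _).trans (hf 0)
  calc LpNorm p f ≤ (∫ _ in Icc (0 : ℝ) 1, T ^ p) ^ (1 / p) :=
        Real.rpow_le_rpow (integral_nonneg fun _ => Real.rpow_nonneg (abs_nonneg _) _)
          (integral_mono_of_nonneg (ae_of_all _ fun _ => Real.rpow_nonneg (abs_nonneg _) _)
            (integrable_const _)
            (ae_of_all _ fun t => Real.rpow_le_rpow (abs_nonneg _) (hf t) hp.le))
          (by positivity)
    _ = T := by simp [← Real.rpow_mul hT, hp.ne']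

/-- Jensen in `u`, then Fubini. -/
lemma integral_LpNorm_le {F : ℝ → ℝ → ℝ} (hF : Measurable (Function.uncurry F)) {T : ℝ}
    (hT : ∀ u t, |F u t| ≤ T) {p : ℝ} (hp : 1 ≤ p) {C : ℝ}
    (hC : ∀ t, LpNorm p (fun u => F u t) ≤ C) :
    ∫ u in Icc (0 : ℝ) 1, LpNorm p (F u) ≤ C := by
  have hp0 : 0 < p := zero_lt_one.trans_le hp
  have hC0 : 0 ≤ C := (LpNorm_nonneg _ _).trans (hC 0)
  have hG : Measurable fun q : ℝ × ℝ => |F q.1 q.2| ^ p := hF.abs.pow_const p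
  have hGint : Integrable (Function.uncurry fun u t => |F u t| ^ p)
      ((volume.restrict (Icc (0 : ℝ) 1)).prod (volume.restrict (Icc (0 : ℝ) 1))) :=
    Integrable.of_bound hG.aestronglyMeasurable (T ^ p) (ae_of_all _ fun q => by
      rw [Function.uncurry_apply_pair, Real.norm_eq_abs,
        abs_of_nonneg (Real.rpow_nonneg (abs_nonneg _) _)]
      exact Real.rpow_le_rpow (abs_nonneg _) (hT q.1 q.2) hp0.le)
  have hmem : MemLp (fun u => LpNorm p (F u)) (ENNReal.ofReal p) (volume.restrict (Icc 0 1)) :=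
    MemLp.of_bound
      (hG.stronglyMeasurable.integral_prod_right'.measurable.pow_const _).aestronglyMeasurable T
      (ae_of_all _ fun u => by
        rw [Real.norm_eq_abs, abs_of_nonneg (LpNorm_nonneg _ _)]
        exact LpNorm_le_of_abs_le hp0 (hT u))
  calc ∫ u in Icc (0 : ℝ) 1, LpNorm p (F u)
      ≤ (∫ u in Icc (0 : ℝ) 1, LpNorm p (F u) ^ p) ^ (1 / p) :=
        integral_le_integral_rpow_rpow_one_div (ae_of_all _ fun _ => LpNorm_nonneg _ _) hp hmem
    _ = (∫ t in Icc (0 : ℝ) 1, LpNorm p (fun u => F u t) ^ p) ^ (1 / p) := by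
        simp_rw [LpNorm_rpow hp0.ne']
        rw [integral_integral_swap hGint]
    _ ≤ (∫ _ in Icc (0 : ℝ) 1, C ^ p) ^ (1 / p) :=
        Real.rpow_le_rpow (integral_nonneg fun _ => Real.rpow_nonneg (LpNorm_nonneg _ _) _)
          (integral_mono_of_nonneg (ae_of_all _ fun _ => Real.rpow_nonneg (LpNorm_nonneg _ _) _)
            (integrable_const _)
            (ae_of_all _ fun t => Real.rpow_le_rpow (LpNorm_nonneg _ _) (hC t) hp0.le))
          (by positivity)
    _ = C := by simp [← Real.rpow_mul hC0, hp0.ne']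

end LpNorm

section Khintchine

variable {ι : Type*} (B : Finset ι) (m : ι → ℕ) (b : ι → ℝ)

lemma integral_rademacher_mul_pow_sum_eq_zero {M : ℕ} (hM : 1 ≤ M) (hB : ∀ j ∈ B, m j ≠ M)
    (s : ℕ) :
    ∫ u in Icc (0 : ℝ) 1, rademacher M u * (∑ j ∈ B, b j * rademacher (m j) u) ^ s = 0 := by
  simp_rw [Finset.sum_pow', Finset.mul_sum, Finset.prod_mul_distrib, mul_left_comm (rademacher M _)]
  rw [integral_finsetSum _ fun g _ => ?_]
  · refine Finset.sum_eq_zero fun g hg => ?_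
    rw [integral_const_mul, integral_rademacher_mul_prod_eq_zero _ _ hM
      fun i _ => hB _ (Fintype.mem_piFinset.mp hg i), mul_zero]
  · refine (Integrable.of_bound (by fun_prop) 1 (ae_of_all _ fun u => ?_)).const_mul _
    rw [Real.norm_eq_abs, abs_mul, abs_rademacher, abs_prod_rademacher _ (fun i => m (g i)),
      one_mul]

lemma integral_pow_mul_rademacher_add_sum {M : ℕ} (hM : 1 ≤ M) (hB : ∀ j ∈ B, m j ≠ M) (x : ℝ)
    (k : ℕ) :
    ∫ u in Icc (0 : ℝ) 1, (x * rademacher M u + ∑ j ∈ B, b j * rademacher (m j) u) ^ (2 * k)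
      = ∑ l ∈ Finset.range (k + 1), x ^ (2 * l) * (2 * k).choose (2 * l) *
          ∫ u in Icc (0 : ℝ) 1, (∑ j ∈ B, b j * rademacher (m j) u) ^ (2 * (k - l)) := by
  set S := fun u => ∑ j ∈ B, b j * rademacher (m j) u
  have hint : ∀ i, Integrable
      (fun u => (x * rademacher M u) ^ i * S u ^ (2 * k - i) * (2 * k).choose i)
      (volume.restrict (Icc 0 1)) := fun i =>
    Integrable.of_bound (by fun_prop) (|x| ^ i * (∑ j ∈ B, |b j|) ^ (2 * k - i) * (2 * k).choose i)
      (ae_of_all _ fun u => by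
        simp only [Real.norm_eq_abs, abs_mul, abs_pow, abs_rademacher, mul_one, Nat.abs_cast]
        gcongr
        exact abs_sum_mul_rademacher_le B m b u)
  have hterm : ∀ i,
      ∫ u in Icc (0 : ℝ) 1, (x * rademacher M u) ^ i * S u ^ (2 * k - i) * (2 * k).choose i
        = x ^ i * (2 * k).choose i *
            ∫ u in Icc (0 : ℝ) 1, rademacher M u ^ i * S u ^ (2 * k - i) := by
    intro i
    rw [← integral_const_mul]
    congr 1 with u
    ring
  have heven : ∀ l, ∫ u in Icc (0 : ℝ) 1, rademacher M u ^ (2 * l) * S u ^ (2 * k - 2 * l)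
      = ∫ u in Icc (0 : ℝ) 1, S u ^ (2 * (k - l)) := by
    intro l
    simp_rw [rademacher_pow_of_even _ _ (even_two_mul l), one_mul, Nat.mul_sub]
  have hodd : ∀ l, ∫ u in Icc (0 : ℝ) 1, rademacher M u ^ (2 * l + 1) * S u ^ (2 * k - (2 * l + 1))
      = 0 := by
    intro l
    simp_rw [rademacher_pow_of_odd _ _ (odd_two_mul_add_one l)]
    exact integral_rademacher_mul_pow_sum_eq_zero B m b hM hB _
  simp_rw [add_pow]
  rw [integral_finsetSum _ fun i _ => hint i, sum_range_two_mul_add_one_eq]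
  simp only [hterm, heven, hodd, mul_zero, Finset.sum_const_zero, add_zero]
  rfl

theorem integral_pow_sum_rademacher_le (hm : Set.InjOn m B) (k : ℕ) :
    ∫ u in Icc (0 : ℝ) 1, (∑ j ∈ B, b j * rademacher (m j) u) ^ (2 * k)
      ≤ (2 * k)! * (∑ j ∈ B, b j ^ 2) ^ k := by
  classical
  induction B using Finset.strongInduction generalizing k with
  | H B ih =>
  by_cases hex : ∃ j₀ ∈ B, 1 ≤ m j₀
  · obtain ⟨j₀, hj₀, hM⟩ := hex
    have hB : ∀ j ∈ B.erase j₀, m j ≠ m j₀ := fun j hj h =>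
      Finset.ne_of_mem_erase hj (hm (Finset.mem_of_mem_erase hj) hj₀ h)
    have ih' := fun l => ih _ (Finset.erase_ssubset hj₀)
      (hm.mono (Finset.coe_subset.mpr (Finset.erase_subset j₀ B))) (k - l)
    simp_rw [← Finset.add_sum_erase B _ hj₀]
    rw [integral_pow_mul_rademacher_add_sum _ m b hM hB]
    calc _ ≤ ∑ l ∈ Finset.range (k + 1), (b j₀ ^ 2) ^ l * (2 * k).choose (2 * l) *
          ((2 * (k - l))! * (∑ j ∈ B.erase j₀, b j ^ 2) ^ (k - l)) := by
          refine Finset.sum_le_sum fun l _ => ?_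
          rw [← pow_mul]
          exact mul_le_mul_of_nonneg_left (ih' l)
            (mul_nonneg ((even_two_mul l).pow_nonneg _) (Nat.cast_nonneg _))
      _ ≤ _ := sum_choose_mul_factorial_le k (sq_nonneg _)
          (Finset.sum_nonneg fun _ _ => sq_nonneg _)
  · push Not at hex
    -- all indices vanish, so by injectivity `B` has at most one element
    have hsq : ∀ u, (∑ j ∈ B, b j * rademacher (m j) u) ^ 2 = ∑ j ∈ B, b j ^ 2 := by
      intro u
      rcases B.eq_empty_or_nonempty with rfl | ⟨x, hx⟩
      · simp
      have : B = {x} := Finset.eq_singleton_iff_unique_mem.mpr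
        ⟨hx, fun y hy => hm hy hx (by have := hex y hy; have := hex x hx; omega)⟩
      simp [this, mul_pow, rademacher_sq]
    simp_rw [pow_mul, hsq, integral_const, probReal_univ, one_smul]
    exact le_mul_of_one_le_left (by positivity) (by exact_mod_cast (2 * k).factorial_pos)

theorem LpNorm_sum_rademacher_le (hm : Set.InjOn m B) {p : ℝ} (hp : 0 < p) {k : ℕ}
    (hpk : p ≤ 2 * k) :
    LpNorm p (fun u => ∑ j ∈ B, b j * rademacher (m j) u)
      ≤ ((2 * k)! : ℝ) ^ (1 / (2 * k : ℝ)) * √(∑ j ∈ B, b j ^ 2) := by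
  have hk : (0 : ℝ) < 2 * k := hp.trans_le hpk
  have hmem : MemLp (fun u => ∑ j ∈ B, b j * rademacher (m j) u) (ENNReal.ofReal (2 * k))
      (volume.restrict (Icc 0 1)) :=
    MemLp.of_bound (by fun_prop) _ (ae_of_all _ fun u => abs_sum_mul_rademacher_le B m b u)
  have h2k : ∀ u, |∑ j ∈ B, b j * rademacher (m j) u| ^ (2 * k : ℝ)
      = (∑ j ∈ B, b j * rademacher (m j) u) ^ (2 * k) := fun u => by
    rw [← (even_two_mul k).pow_abs, ← Real.rpow_natCast]
    push_cast
    rfl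
  have hS : 0 ≤ ∑ j ∈ B, b j ^ 2 := Finset.sum_nonneg fun _ _ => sq_nonneg _
  refine (LpNorm_le_LpNorm hp hpk hmem).trans ?_
  rw [LpNorm]
  simp_rw [h2k]
  calc _ ≤ ((2 * k)! * (∑ j ∈ B, b j ^ 2) ^ k) ^ (1 / (2 * k : ℝ)) := by
        gcongr
        · exact integral_nonneg fun _ => (even_two_mul k).pow_nonneg _
        · exact integral_pow_sum_rademacher_le B m b hm k
    _ = _ := by
        rw [Real.mul_rpow (by positivity) (by positivity), Real.sqrt_eq_rpow, ← Real.rpow_natCast,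
          ← Real.rpow_mul hS]
        congr 2
        field_simp [(by linarith : (k : ℝ) ≠ 0)]

end Khintchine

section Chaos

variable {d : ℕ}

@[fun_prop]
lemma measurable_chaos (j : Fin d → ℕ) : Measurable (chaos j) := by
  unfold chaos
  fun_prop

lemma chaos_sq (j : Fin d → ℕ) (t : ℝ) : chaos j t ^ 2 = 1 := by
  rw [chaos, ← Finset.prod_pow]
  exact Finset.prod_eq_one fun i _ => rademacher_sq (j i) t

lemma abs_chaos (j : Fin d → ℕ) (t : ℝ) : |chaos j t| = 1 :=
  abs_prod_rademacher _ j t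

lemma integral_chaos_mul_chaos_of_ne {j k : Fin d → ℕ} (hj : j ∈ Delta d) (hk : k ∈ Delta d)
    (hjk : j ≠ k) : ∫ t in Icc (0 : ℝ) 1, chaos j t * chaos k t = 0 := by
  wlog h : ∃ i₀, j i₀ ∉ Set.range k generalizing j k
  · have hkj : ∃ i₀, k i₀ ∉ Set.range j := by
      by_contra! hkj
      exact hjk ((hj.1.range_inj hk.1).mp (Set.Subset.antisymm
        (by rintro _ ⟨i, rfl⟩; push Not at h; exact h i) (by rintro _ ⟨i, rfl⟩; exact hkj i)))
    simpa only [mul_comm] using this hk hj hjk.symm hkj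
  obtain ⟨i₀, hi₀⟩ := h
  have hsplit : ∀ t, chaos j t * chaos k t = rademacher (j i₀) t *
      ∏ x ∈ (Finset.univ.erase i₀).disjSum Finset.univ, rademacher (Sum.elim j k x) t := fun t => by
    rw [Finset.prod_disjSum, chaos, chaos, ← Finset.mul_prod_erase _ _ (Finset.mem_univ i₀)]
    simp only [Sum.elim_inl, Sum.elim_inr, mul_assoc]
  simp_rw [hsplit]
  refine integral_rademacher_mul_prod_eq_zero _ _ (hj.2 i₀) fun x hx => ?_
  rcases x with i | i
  · exact fun h => Finset.ne_of_mem_erase (Finset.inl_mem_disjSum.mp hx) (hj.1.injective h)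
  · exact fun h => hi₀ ⟨i, h⟩

lemma integral_sq_sum_chaos (A : Finset (Fin d → ℕ)) (hA : ↑A ⊆ Delta d) (a : (Fin d → ℕ) → ℝ) :
    ∫ t in Icc (0 : ℝ) 1, (∑ j ∈ A, a j * chaos j t) ^ 2 = ∑ j ∈ A, a j ^ 2 := by
  have hint : ∀ j k : Fin d → ℕ, Integrable (fun t => a j * a k * (chaos j t * chaos k t))
      (volume.restrict (Icc 0 1)) := fun j k =>
    (Integrable.of_bound (by fun_prop) 1 (ae_of_all _ fun t => by
      rw [Real.norm_eq_abs, abs_mul, abs_chaos, abs_chaos, mul_one])).const_mul _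
  simp_rw [sq, Finset.sum_mul_sum, mul_mul_mul_comm]
  rw [integral_finsetSum _ fun j _ => integrable_finsetSum _ fun k _ => hint j k]
  refine Finset.sum_congr rfl fun j hj => ?_
  rw [integral_finsetSum _ fun k _ => hint j k, Finset.sum_eq_single j
    (fun k hk hkj => by
      rw [integral_const_mul, integral_chaos_mul_chaos_of_ne (hA hj) (hA hk) hkj.symm, mul_zero])
    (fun hj' => absurd hj hj')]
  simp_rw [← sq, chaos_sq]
  simp

lemma LpNorm_two_sum_chaos (A : Finset (Fin d → ℕ)) (hA : ↑A ⊆ Delta d) (a : (Fin d → ℕ) → ℝ) :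
    LpNorm 2 (fun t => ∑ j ∈ A, a j * chaos j t) = √(∑ j ∈ A, a j ^ 2) := by
  simp_rw [LpNorm, Real.rpow_two, sq_abs, integral_sq_sum_chaos A hA a, Real.sqrt_eq_rpow]

lemma abs_sum_mul_chaos_le (A : Finset (Fin d → ℕ)) (a : (Fin d → ℕ) → ℝ) (t : ℝ) :
    |∑ j ∈ A, a j * chaos j t| ≤ ∑ j ∈ A, |a j| :=
  (Finset.abs_sum_le_sum_abs _ _).trans_eq
    (Finset.sum_congr rfl fun j _ => by rw [abs_mul, abs_chaos, mul_one])

lemma LpNorm_sum_rademacher_mul_chaos_le (A : Finset (Fin d → ℕ)) {π : (Fin d → ℕ) → ℕ}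
    (hπ : Set.InjOn π A) (a : (Fin d → ℕ) → ℝ) {p : ℝ} (hp : 0 < p) {k : ℕ} (hpk : p ≤ 2 * k)
    (t : ℝ) :
    LpNorm p (fun u => ∑ j ∈ A, rademacher (π j) u * a j * chaos j t)
      ≤ ((2 * k)! : ℝ) ^ (1 / (2 * k : ℝ)) * √(∑ j ∈ A, a j ^ 2) := by
  have hcomm : (fun u => ∑ j ∈ A, rademacher (π j) u * a j * chaos j t)
      = fun u => ∑ j ∈ A, a j * chaos j t * rademacher (π j) u :=
    funext fun u => Finset.sum_congr rfl fun j _ => by ring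
  rw [hcomm]
  refine (LpNorm_sum_rademacher_le A π _ hπ hp hpk).trans_eq ?_
  simp_rw [mul_pow, chaos_sq, mul_one]

end Chaos

theorem stmt6_general (d : ℕ) (p : ℝ) (hp : 2 ≤ p) :
    ∃ D > (0 : ℝ), ∀ π : (Fin d → ℕ) → ℕ, Set.InjOn π (Delta d) →
      ∀ A : Finset (Fin d → ℕ), ↑A ⊆ Delta d → ∀ a : (Fin d → ℕ) → ℝ,
        ∫ u in Set.Icc (0 : ℝ) 1,
            LpNorm p (fun t => ∑ j ∈ A, rademacher (π j) u * a j * chaos j t)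
          ≤ D * LpNorm p (fun t => ∑ j ∈ A, a j * chaos j t) := by
  obtain ⟨k, hk⟩ : ∃ k : ℕ, p ≤ 2 * k := ⟨⌈p / 2⌉₊, by linarith [Nat.le_ceil (p / 2)]⟩
  refine ⟨((2 * k)! : ℝ) ^ (1 / (2 * k : ℝ)), by positivity, fun π hπ A hA a => ?_⟩
  have hbound : ∀ u t, |∑ j ∈ A, rademacher (π j) u * a j * chaos j t| ≤ ∑ j ∈ A, |a j| :=
    fun u t => (Finset.abs_sum_le_sum_abs _ _).trans_eq (Finset.sum_congr rfl fun j _ => by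
      rw [abs_mul, abs_mul, abs_rademacher, abs_chaos, one_mul, mul_one])
  calc _ ≤ ((2 * k)! : ℝ) ^ (1 / (2 * k : ℝ)) * √(∑ j ∈ A, a j ^ 2) :=
        integral_LpNorm_le (by fun_prop) hbound (by linarith)
          (LpNorm_sum_rademacher_mul_chaos_le A (hπ.mono hA) a (by linarith) hk)
    _ = ((2 * k)! : ℝ) ^ (1 / (2 * k : ℝ)) * LpNorm 2 (fun t => ∑ j ∈ A, a j * chaos j t) := by
        rw [LpNorm_two_sum_chaos A hA a]
    _ ≤ ((2 * k)! : ℝ) ^ (1 / (2 * k : ℝ)) * LpNorm p (fun t => ∑ j ∈ A, a j * chaos j t) := by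
        gcongr
        exact LpNorm_le_LpNorm two_pos hp
          (MemLp.of_bound (by fun_prop) _ (ae_of_all _ (abs_sum_mul_chaos_le A a)))

/-- the Rademacher chaos `{𝐫_ȷ}_{ȷ∈Δ^d}` is a RUC sequence in
`L_p[0,1]` for every `2 ≤ p < ∞`. -/
theorem stmt6 (d : ℕ) (hd : 1 ≤ d) (p : ℝ) (hp : 2 ≤ p) :
    ∃ D > (0 : ℝ), ∀ π : (Fin d → ℕ) → ℕ, Set.InjOn π (Delta d) →
      ∀ A : Finset (Fin d → ℕ), ↑A ⊆ Delta d → ∀ a : (Fin d → ℕ) → ℝ,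
        ∫ u in Set.Icc (0 : ℝ) 1,
            LpNorm p (fun t => ∑ j ∈ A, rademacher (π j) u * a j * chaos j t)
          ≤ D * LpNorm p (fun t => ∑ j ∈ A, a j * chaos j t) :=
  stmt6_general d p hp
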